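/- (The last-stage/first-stage cost relation, equation (26) in the proof of the paper's Theorem 1.) Let ε ≥ 0, c ≥ 0, Φ ≥ 0, and let κ ≥ 0 be such that κQ − AᵀQA is positive semidefinite. Let (ξ₀,w₀), (ξ,w) ∈ ℝⁿ×ℝᵐ and (z₀,u₀), (z,u) ∈ ℝⁿ×ℝᵐ satisfy: ‖(ξ,w) − (z,u)‖_H ≤ 2√(εc), ‖(ξ₀,w₀) − (z₀,u₀)‖_H ≤ 2√(εc), ℓ(z,u) ≤ Φ·ℓ(z₀,u₀), c ≤ ℓ(z₀,u₀), and c ≤ ℓ(ξ₀,w₀). Then ℓ*(Aξ) ≤ κ·(√Φ + √(2ε))²·(1 + √(2ε))²·ℓ(ξ₀,w₀). -/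

import Mathlib

open Matrix

/-- The stage cost `ℓ(x,u) = ½(xᵀQx + uᵀRu)`. -/
noncomputable def stageCost {n m : ℕ} (Q : Matrix (Fin n) (Fin n) ℝ)
    (R : Matrix (Fin m) (Fin m) ℝ) (x : Fin n → ℝ) (u : Fin m → ℝ) : ℝ :=
  (1/2) * (x ⬝ᵥ Q *ᵥ x + u ⬝ᵥ R *ᵥ u)

/-- `ℓ*(x) = ½xᵀQx`, the minimal stage cost for fixed state `x`. -/
noncomputable def minStageCost {n : ℕ} (Q : Matrix (Fin n) (Fin n) ℝ)
    (x : Fin n → ℝ) : ℝ := (1/2) * (x ⬝ᵥ Q *ᵥ x)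

/-- The norm `‖(x,u)‖_H = √(xᵀQx + uᵀRu)`, so `‖(x,u)‖_H² = 2ℓ(x,u)`. -/
noncomputable def hNorm {n m : ℕ} (Q : Matrix (Fin n) (Fin n) ℝ)
    (R : Matrix (Fin m) (Fin m) ℝ) (x : Fin n → ℝ) (u : Fin m → ℝ) : ℝ :=
  Real.sqrt (x ⬝ᵥ Q *ᵥ x + u ⬝ᵥ R *ᵥ u)

/-!
`‖·‖_H` is the seminorm of the positive semidefinite block matrix `diag(Q, R)`, so it obeys the
triangle inequality. Because `c` is below the reference cost `ℓ`, a perturbation of `H`-norm at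
most `2√(εc)` is at most `√(2ε)` times the `H`-norm of the reference pair. This gives
`‖(z₀,u₀)‖_H ≤ (1 + √(2ε)) ‖(ξ₀,w₀)‖_H` and `‖(ξ,w)‖_H ≤ (√Φ + √(2ε)) ‖(z₀,u₀)‖_H`; squaring the
chain and using `ℓ*(Aξ) ≤ κ ℓ(ξ,w)`, which is `κQ ⪰ AᵀQA`, yields the claim.
-/

namespace Matrix

variable {ι ι' : Type*} [Fintype ι] [Fintype ι']

theorem sqrt_dotProduct_mulVec_add_le {M : Matrix ι ι ℝ} (hM : M.PosSemidef) (x y : ι → ℝ) :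
    √((x + y) ⬝ᵥ M *ᵥ (x + y)) ≤ √(x ⬝ᵥ M *ᵥ x) + √(y ⬝ᵥ M *ᵥ y) := by
  have hnorm (v : ι → ℝ) :
      @norm _ (M.toSeminormedAddCommGroup hM).toNorm v = √(v ⬝ᵥ M *ᵥ v) :=
    congrArg Real.sqrt (dotProduct_comm _ _)
  simpa only [hnorm] using
    @norm_add_le _ (M.toSeminormedAddCommGroup hM).toSeminormedAddGroup x y

theorem PosSemidef.fromBlocks_zero {R : Type*} [CommRing R] [PartialOrder R] [StarRing R]
    [IsOrderedAddMonoid R] {A : Matrix ι ι R} {D : Matrix ι' ι' R} (hA : A.PosSemidef)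
    (hD : D.PosSemidef) : (fromBlocks A 0 0 D).PosSemidef := by
  refine .of_dotProduct_mulVec_nonneg (hA.isHermitian.fromBlocks (by simp) hD.isHermitian)
    fun x => ?_
  rw [← Sum.elim_comp_inl_inr x]
  simp only [Function.star_sumElim, fromBlocks_mulVec, Sum.elim_comp_inl, Sum.elim_comp_inr,
    zero_mulVec, add_zero, zero_add, sumElim_dotProduct_sumElim]
  exact add_nonneg (hA.dotProduct_mulVec_nonneg _) (hD.dotProduct_mulVec_nonneg _)

end Matrix

theorem Real.two_mul_sqrt_mul_le {ε c L : ℝ} (hc : 0 ≤ c) (hcL : c ≤ L) :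
    2 * √(ε * c) ≤ √(2 * ε) * √(2 * L) := by
  calc 2 * √(ε * c) = √(ε * c * 2 ^ 2) := by
        rw [Real.sqrt_mul' _ (sq_nonneg 2), Real.sqrt_sq zero_le_two, mul_comm]
    _ = √(2 * ε) * √(2 * c) := by
        rw [← Real.sqrt_mul' _ (by positivity)]
        ring_nf
    _ ≤ √(2 * ε) * √(2 * L) := by gcongr

section StageCost

variable {n m : ℕ} {Q : Matrix (Fin n) (Fin n) ℝ} {R : Matrix (Fin m) (Fin m) ℝ}

theorem hNorm_eq_sqrt_stageCost (x : Fin n → ℝ) (u : Fin m → ℝ) :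
    hNorm Q R x u = √(2 * stageCost Q R x u) := by
  rw [hNorm, stageCost]
  congr 1
  ring

theorem stageCost_nonneg (hQ : Q.PosSemidef) (hR : R.PosSemidef) (x : Fin n → ℝ)
    (u : Fin m → ℝ) : 0 ≤ stageCost Q R x u := by
  have hxu := add_nonneg (hQ.dotProduct_mulVec_nonneg x) (hR.dotProduct_mulVec_nonneg u)
  rw [star_trivial, star_trivial] at hxu
  unfold stageCost
  positivity

theorem hNorm_sq (hQ : Q.PosSemidef) (hR : R.PosSemidef) (x : Fin n → ℝ) (u : Fin m → ℝ) :
    hNorm Q R x u ^ 2 = 2 * stageCost Q R x u := by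
  rw [hNorm_eq_sqrt_stageCost, Real.sq_sqrt (by linarith [stageCost_nonneg hQ hR x u])]

theorem hNorm_eq_sqrt_dotProduct_fromBlocks (x : Fin n → ℝ) (u : Fin m → ℝ) :
    hNorm Q R x u = √(Sum.elim x u ⬝ᵥ fromBlocks Q 0 0 R *ᵥ Sum.elim x u) := by
  simp only [hNorm, fromBlocks_mulVec, Sum.elim_comp_inl, Sum.elim_comp_inr, zero_mulVec,
    add_zero, zero_add, sumElim_dotProduct_sumElim]

theorem hNorm_add_le (hQ : Q.PosSemidef) (hR : R.PosSemidef) (x y : Fin n → ℝ)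
    (u v : Fin m → ℝ) : hNorm Q R (x + y) (u + v) ≤ hNorm Q R x u + hNorm Q R y v := by
  simpa only [hNorm_eq_sqrt_dotProduct_fromBlocks, Sum.elim_add_add] using
    sqrt_dotProduct_mulVec_add_le (hQ.fromBlocks_zero hR) (Sum.elim x u) (Sum.elim y v)

theorem hNorm_sub_comm (x y : Fin n → ℝ) (u v : Fin m → ℝ) :
    hNorm Q R (x - y) (u - v) = hNorm Q R (y - x) (v - u) := by
  rw [← neg_sub y x, ← neg_sub v u]
  simp only [hNorm, mulVec_neg, dotProduct_neg, neg_dotProduct, neg_neg]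

theorem hNorm_le_sqrt_mul_hNorm (hQ : Q.PosSemidef) (hR : R.PosSemidef) {x y : Fin n → ℝ}
    {u v : Fin m → ℝ} {Φ : ℝ} (h : stageCost Q R x u ≤ Φ * stageCost Q R y v) :
    hNorm Q R x u ≤ √Φ * hNorm Q R y v := by
  rw [hNorm_eq_sqrt_stageCost, hNorm_eq_sqrt_stageCost,
    ← Real.sqrt_mul' _ (by linarith [stageCost_nonneg hQ hR y v])]
  exact Real.sqrt_le_sqrt (by linarith)

theorem stageCost_le_sq_mul (hQ : Q.PosSemidef) (hR : R.PosSemidef) {x y : Fin n → ℝ}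
    {u v : Fin m → ℝ} {K : ℝ} (h : hNorm Q R x u ≤ K * hNorm Q R y v) :
    stageCost Q R x u ≤ K ^ 2 * stageCost Q R y v := by
  have h2 : hNorm Q R x u ^ 2 ≤ (K * hNorm Q R y v) ^ 2 :=
    pow_le_pow_left₀ (Real.sqrt_nonneg _) h 2
  rw [mul_pow, hNorm_sq hQ hR, hNorm_sq hQ hR] at h2
  linarith

theorem minStageCost_mulVec_le (hR : R.PosSemidef) {A : Matrix (Fin n) (Fin n) ℝ} {κ : ℝ}
    (hκ0 : 0 ≤ κ) (hκ : (κ • Q - Aᵀ * Q * A).PosSemidef) (x : Fin n → ℝ) (u : Fin m → ℝ) :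
    minStageCost Q (A *ᵥ x) ≤ κ * stageCost Q R x u := by
  have hA : (A *ᵥ x) ⬝ᵥ Q *ᵥ (A *ᵥ x) ≤ κ * (x ⬝ᵥ Q *ᵥ x) := by
    have hx := hκ.dotProduct_mulVec_nonneg x
    rw [star_trivial, sub_mulVec, dotProduct_sub, smul_mulVec, dotProduct_smul, smul_eq_mul,
      ← mulVec_mulVec, ← mulVec_mulVec, dotProduct_mulVec x Aᵀ, vecMul_transpose] at hx
    linarith
  have hu := hR.dotProduct_mulVec_nonneg u
  rw [star_trivial] at hu
  unfold minStageCost stageCost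
  linarith [mul_nonneg hκ0 hu]

theorem hNorm_le_of_hNorm_sub_le (hQ : Q.PosSemidef) (hR : R.PosSemidef)
    {x x' y : Fin n → ℝ} {u u' v : Fin m → ℝ} {a ε c : ℝ} (hc : 0 ≤ c)
    (hcL : c ≤ stageCost Q R y v) (hx : hNorm Q R x u ≤ a * hNorm Q R y v)
    (hx' : hNorm Q R (x' - x) (u' - u) ≤ 2 * √(ε * c)) :
    hNorm Q R x' u' ≤ (a + √(2 * ε)) * hNorm Q R y v := by
  calc hNorm Q R x' u' = hNorm Q R (x + (x' - x)) (u + (u' - u)) := by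
        rw [add_sub_cancel, add_sub_cancel]
    _ ≤ hNorm Q R x u + hNorm Q R (x' - x) (u' - u) := hNorm_add_le hQ hR _ _ _ _
    _ ≤ a * hNorm Q R y v + √(2 * ε) * hNorm Q R y v := by
        gcongr
        rw [hNorm_eq_sqrt_stageCost y v]
        exact hx'.trans (Real.two_mul_sqrt_mul_le hc hcL)
    _ = (a + √(2 * ε)) * hNorm Q R y v := by ring

end StageCost

theorem last_first_stage_cost_relation_general {n m : ℕ}
    (A : Matrix (Fin n) (Fin n) ℝ)
    (Q : Matrix (Fin n) (Fin n) ℝ) (hQ : Q.PosDef)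
    (R : Matrix (Fin m) (Fin m) ℝ) (hR : R.PosDef)
    (ε c Φ κ : ℝ) (hc : 0 ≤ c) (hκ0 : 0 ≤ κ)
    (hκ : (κ • Q - Aᵀ * Q * A).PosSemidef)
    (ξ₀ ξ z₀ z : Fin n → ℝ) (w₀ w u₀ u : Fin m → ℝ)
    (hnrm : hNorm Q R (ξ - z) (w - u) ≤ 2 * Real.sqrt (ε * c))
    (hnrm0 : hNorm Q R (ξ₀ - z₀) (w₀ - u₀) ≤ 2 * Real.sqrt (ε * c))
    (hΦbound : stageCost Q R z u ≤ Φ * stageCost Q R z₀ u₀)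
    (hc1 : c ≤ stageCost Q R z₀ u₀)
    (hc2 : c ≤ stageCost Q R ξ₀ w₀) :
    minStageCost Q (A *ᵥ ξ) ≤
      κ * (Real.sqrt Φ + Real.sqrt (2 * ε)) ^ 2 * (1 + Real.sqrt (2 * ε)) ^ 2 *
        stageCost Q R ξ₀ w₀ := by
  have hQ' := hQ.posSemidef
  have hR' := hR.posSemidef
  have hfirst : hNorm Q R z₀ u₀ ≤ (1 + √(2 * ε)) * hNorm Q R ξ₀ w₀ :=
    hNorm_le_of_hNorm_sub_le hQ' hR' hc hc2 (one_mul _).ge (by rwa [hNorm_sub_comm])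
  have hlast : hNorm Q R ξ w ≤ (√Φ + √(2 * ε)) * hNorm Q R z₀ u₀ :=
    hNorm_le_of_hNorm_sub_le hQ' hR' hc hc1 (hNorm_le_sqrt_mul_hNorm hQ' hR' hΦbound) hnrm
  have hchain : hNorm Q R ξ w ≤ ((√Φ + √(2 * ε)) * (1 + √(2 * ε))) * hNorm Q R ξ₀ w₀ := by
    rw [mul_assoc]
    exact hlast.trans (by gcongr)
  calc minStageCost Q (A *ᵥ ξ) ≤ κ * stageCost Q R ξ w := minStageCost_mulVec_le hR' hκ0 hκ ξ w
    _ ≤ κ * (((√Φ + √(2 * ε)) * (1 + √(2 * ε))) ^ 2 * stageCost Q R ξ₀ w₀) := by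
        gcongr
        exact stageCost_le_sq_mul hQ' hR' hchain
    _ = κ * (√Φ + √(2 * ε)) ^ 2 * (1 + √(2 * ε)) ^ 2 * stageCost Q R ξ₀ w₀ := by ring

/-- The last-stage/first-stage cost relation (equation (26) in the proof of the
paper's Theorem 1). -/
theorem last_first_stage_cost_relation {n m : ℕ} (hn : 1 ≤ n) (hm : 1 ≤ m)
    (A : Matrix (Fin n) (Fin n) ℝ)
    (Q : Matrix (Fin n) (Fin n) ℝ) (hQ : Q.PosDef)
    (R : Matrix (Fin m) (Fin m) ℝ) (hR : R.PosDef)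
    (ε c Φ κ : ℝ) (hε : 0 ≤ ε) (hc : 0 ≤ c) (hΦ : 0 ≤ Φ) (hκ0 : 0 ≤ κ)
    (hκ : (κ • Q - Aᵀ * Q * A).PosSemidef)
    (ξ₀ ξ z₀ z : Fin n → ℝ) (w₀ w u₀ u : Fin m → ℝ)
    (hnrm : hNorm Q R (ξ - z) (w - u) ≤ 2 * Real.sqrt (ε * c))
    (hnrm0 : hNorm Q R (ξ₀ - z₀) (w₀ - u₀) ≤ 2 * Real.sqrt (ε * c))
    (hΦbound : stageCost Q R z u ≤ Φ * stageCost Q R z₀ u₀)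
    (hc1 : c ≤ stageCost Q R z₀ u₀)
    (hc2 : c ≤ stageCost Q R ξ₀ w₀) :
    minStageCost Q (A *ᵥ ξ) ≤
      κ * (Real.sqrt Φ + Real.sqrt (2 * ε)) ^ 2 * (1 + Real.sqrt (2 * ε)) ^ 2 *
        stageCost Q R ξ₀ w₀ :=
  last_first_stage_cost_relation_general A Q hQ R hR ε c Φ κ hc hκ0 hκ ξ₀ ξ z₀ z w₀ w u₀ u hnrm
    hnrm0 hΦbound hc1 hc2
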